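/- arXiv:math/0607360 — 2 statements merged into one kernel-verified Lean document; each statement's English description precedes it below -/
import Mathlib

section
/- In the local model, let X = Σ_h X^h X_h + Σ_h X^{h̄} X_{h̄} be a fiber-preserving vector field on TU inducing V = Σ_h X^h ∂/∂x^h on U. Then the Lie derivative of g₁ along X satisfies, for all i, j: (L_X g₁)(X_i, X_j) = (L_V g)_{ij}, (L_X g₁)(X_i, X_{j̄}) = 0, and (L_X g₁)(X_{ī}, X_{j̄}) = 0. -/
open scoped BigOperators

namespace TangentLift

/-- A point of the tangent bundle `TU = U × ℝⁿ` in coordinates `(x, y)`. -/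
abbrev Pt (n : ℕ) := (Fin n → ℝ) × (Fin n → ℝ)

variable {n : ℕ}

/-- Partial derivative `∂_i f` of a function on `ℝⁿ`. -/
noncomputable def pd (i : Fin n) (f : (Fin n → ℝ) → ℝ) (x : Fin n → ℝ) : ℝ :=
  fderiv ℝ f x (Pi.single i 1)

/-- The Christoffel symbols `Γ^k_{ij}` of a metric `g` given in coordinates. -/
noncomputable def Gam (g : (Fin n → ℝ) → Matrix (Fin n) (Fin n) ℝ)
    (k i j : Fin n) (x : Fin n → ℝ) : ℝ :=
  (1 / 2) * ∑ m, (g x)⁻¹ k m *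
    (pd i (fun z => g z m j) x + pd j (fun z => g z m i) x - pd m (fun z => g z i j) x)

/-- The curvature tensor `K_{ijk}{}^m` of the metric `g`. -/
noncomputable def Curv (g : (Fin n → ℝ) → Matrix (Fin n) (Fin n) ℝ)
    (i j k m : Fin n) (x : Fin n → ℝ) : ℝ :=
  pd i (Gam g m j k) x - pd j (Gam g m i k) x
    + ∑ a, (Gam g m i a x * Gam g a j k x - Gam g m j a x * Gam g a i k x)

/-- The horizontal adapted frame field `X_h(x,y) = ∂/∂x^h − Σ_{a,m} y^a Γ^m_{ah}(x) ∂/∂y^m`. -/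
noncomputable def XH (g : (Fin n → ℝ) → Matrix (Fin n) (Fin n) ℝ) (h : Fin n) (p : Pt n) :
    Pt n :=
  (Pi.single h 1, fun m => -∑ a, p.2 a * Gam g m a h p.1)

/-- The vertical adapted frame field `X_h̄(x,y) = ∂/∂y^h`. -/
noncomputable def XV (h : Fin n) (_p : Pt n) : Pt n := (0, Pi.single h 1)

/-- Lie bracket of vector fields on `U × ℝⁿ`: `[V,W](p) = DW(p)(V(p)) − DV(p)(W(p))`. -/
noncomputable def lie (V W : Pt n → Pt n) (p : Pt n) : Pt n :=
  fderiv ℝ W p (V p) - fderiv ℝ V p (W p)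

/-- Directional derivative of a function on `TU` along the vector field `Z`. -/
noncomputable def dirD (Z : Pt n → Pt n) (f : Pt n → ℝ) (p : Pt n) : ℝ :=
  fderiv ℝ f p (Z p)

/-- The vertical components of a tangent vector `v` at `p` in the adapted frame,
i.e. the coefficients of the `X_m̄` in the expansion of `v`. -/
noncomputable def ver (g : (Fin n → ℝ) → Matrix (Fin n) (Fin n) ℝ) (p : Pt n) (v : Pt n) :
    Fin n → ℝ :=
  fun m => v.2 m + ∑ a, ∑ i, p.2 a * Gam g m a i p.1 * v.1 i

/-- The bilinear-form field `g₁` on `TU`: `g₁(X_i,X_j) = g_{ij}`, vanishing on vertical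
arguments. -/
noncomputable def g1 (g : (Fin n → ℝ) → Matrix (Fin n) (Fin n) ℝ) (p : Pt n) (v w : Pt n) : ℝ :=
  ∑ i, ∑ j, g p.1 i j * v.1 i * w.1 j

/-- The bilinear-form field `g₂` on `TU`: `g₂(X_i,X_j̄) = g₂(X_j̄,X_i) = g_{ij}`, vanishing on
two horizontal or two vertical arguments. -/
noncomputable def g2 (g : (Fin n → ℝ) → Matrix (Fin n) (Fin n) ℝ) (p : Pt n) (v w : Pt n) : ℝ :=
  ∑ i, ∑ j, g p.1 i j * (v.1 i * ver g p w j + w.1 i * ver g p v j)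

/-- The bilinear-form field `g₃` on `TU`: `g₃(X_ī,X_j̄) = g_{ij}`, vanishing on horizontal
arguments. -/
noncomputable def g3 (g : (Fin n → ℝ) → Matrix (Fin n) (Fin n) ℝ) (p : Pt n) (v w : Pt n) : ℝ :=
  ∑ i, ∑ j, g p.1 i j * ver g p v i * ver g p w j

/-- The lift metric `g̃ = a g₁ + b g₂ + c g₃` on `TU`. -/
noncomputable def gLift (g : (Fin n → ℝ) → Matrix (Fin n) (Fin n) ℝ) (a b c : ℝ)
    (p : Pt n) (v w : Pt n) : ℝ :=
  a * g1 g p v w + b * g2 g p v w + c * g3 g p v w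

/-- Lie derivative of a field `S` of bilinear forms along the vector field `X`, evaluated on
the vector fields `V`, `W` at the point `p`:
`(L_X S)(V,W) = X·(S(V,W)) − S([X,V],W) − S(V,[X,W])`. -/
noncomputable def lieDer (X : Pt n → Pt n) (S : Pt n → Pt n → Pt n → ℝ)
    (V W : Pt n → Pt n) (p : Pt n) : ℝ :=
  dirD X (fun q => S q (V q) (W q)) p - S p (lie X V p) (W p) - S p (V p) (lie X W p)

/-- `g` is a Riemannian metric on `U` given in coordinates: each component is smooth on `U`,
and at each point of `U` the matrix `(g_{ij})` is symmetric positive definite. -/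
def IsMetric (U : Set (Fin n → ℝ)) (g : (Fin n → ℝ) → Matrix (Fin n) (Fin n) ℝ) : Prop :=
  (∀ i j, ContDiffOn ℝ (⊤ : ℕ∞) (fun x => g x i j) U) ∧
    (∀ x ∈ U, (g x).IsSymm) ∧ (∀ x ∈ U, (g x).PosDef)

/-- The vector field `X = Σ_h X^h X_h + Σ_h X^h̄ X_h̄` on `TU` with the given components in
the adapted frame; for a fiber-preserving field the `X^h` are functions of `x` alone. -/
noncomputable def mkVF (g : (Fin n → ℝ) → Matrix (Fin n) (Fin n) ℝ)
    (Xh' : Fin n → (Fin n → ℝ) → ℝ) (Xv' : Fin n → Pt n → ℝ) (p : Pt n) : Pt n :=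
  (∑ h, Xh' h p.1 • XH g h p) + ∑ h, Xv' h p • XV h p

/-- Smoothness of the components of a fiber-preserving vector field on `TU`. -/
def SmoothComponents (U : Set (Fin n → ℝ)) (Xh' : Fin n → (Fin n → ℝ) → ℝ)
    (Xv' : Fin n → Pt n → ℝ) : Prop :=
  (∀ h, ContDiffOn ℝ (⊤ : ℕ∞) (Xh' h) U) ∧ (∀ h, ContDiffOn ℝ (⊤ : ℕ∞) (Xv' h) (U ×ˢ Set.univ))

/-- `X` is a conformal vector field for the lift metric `g̃ = a g₁ + b g₂ + c g₃` with
conformal factor `Ω`, i.e. `L_X g̃ = 2 Ω g̃` as fields of bilinear forms on `TU`, tested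
against all smooth vector fields on `TU`. -/
def Conformal (U : Set (Fin n → ℝ)) (g : (Fin n → ℝ) → Matrix (Fin n) (Fin n) ℝ)
    (a b c : ℝ) (X : Pt n → Pt n) (Ω : Pt n → ℝ) : Prop :=
  ∀ V W : Pt n → Pt n, ContDiffOn ℝ (⊤ : ℕ∞) V (U ×ˢ Set.univ) → ContDiffOn ℝ (⊤ : ℕ∞) W (U ×ˢ Set.univ) →
    ∀ p : Pt n, p.1 ∈ U →
      lieDer X (gLift g a b c) V W p = 2 * Ω p * gLift g a b c p (V p) (W p)

/-- The components `(L_V g)_{ij}` of the Lie derivative of `g` along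
`V = Σ_h V^h ∂/∂x^h` on `U`. -/
noncomputable def lieG (g : (Fin n → ℝ) → Matrix (Fin n) (Fin n) ℝ)
    (Vf : Fin n → (Fin n → ℝ) → ℝ) (i j : Fin n) (x : Fin n → ℝ) : ℝ :=
  ∑ a, (Vf a x * pd a (fun z => g z i j) x + pd i (Vf a) x * g x a j + pd j (Vf a) x * g x i a)

/-- The covariant derivative `∇_i V^m = ∂_i V^m + Σ_a Γ^m_{ia} V^a`. -/
noncomputable def covD (g : (Fin n → ℝ) → Matrix (Fin n) (Fin n) ℝ)
    (Vf : Fin n → (Fin n → ℝ) → ℝ) (i m : Fin n) (x : Fin n → ℝ) : ℝ :=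
  pd i (Vf m) x + ∑ a, Gam g m i a x * Vf a x

/-- The complete lift `X^C = Σ_h V^h X_h + Σ_{h,m} y^m (Σ_a Γ^h_{ma} V^a + ∂_m V^h) X_h̄`
of the vector field `V = Σ_h V^h ∂/∂x^h` on `U`. -/
noncomputable def completeLift (g : (Fin n → ℝ) → Matrix (Fin n) (Fin n) ℝ)
    (Vf : Fin n → (Fin n → ℝ) → ℝ) (p : Pt n) : Pt n :=
  (∑ h, Vf h p.1 • XH g h p)
    + ∑ h, (∑ m, p.2 m * ((∑ a, Gam g h m a p.1 * Vf a p.1) + pd m (Vf h) p.1)) • XV h p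

/-- The vertical lift `X^V = Σ_h V^h X_h̄` of `V = Σ_h V^h ∂/∂x^h`. -/
noncomputable def vertLift (Vf : Fin n → (Fin n → ℝ) → ℝ) (p : Pt n) : Pt n :=
  ∑ h, Vf h p.1 • XV h p

/-- The horizontal lift `X^H = Σ_h V^h X_h` of `V = Σ_h V^h ∂/∂x^h`. -/
noncomputable def horLift (g : (Fin n → ℝ) → Matrix (Fin n) (Fin n) ℝ)
    (Vf : Fin n → (Fin n → ℝ) → ℝ) (p : Pt n) : Pt n :=
  ∑ h, Vf h p.1 • XH g h p


section Aux

variable {n : ℕ}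

private lemma clm_eval (L : (Fin n → ℝ) →L[ℝ] ℝ) (v : Fin n → ℝ) :
    L v = ∑ a, v a * L (Pi.single a 1) := by
  conv_lhs => rw [← Finset.univ_sum_single v, map_sum]
  refine Finset.sum_congr rfl fun a _ => ?_
  have h : Pi.single a (v a) = v a • (Pi.single a 1 : Fin n → ℝ) := by
    rw [← Pi.single_smul, smul_eq_mul, mul_one]
  rw [h, map_smul, smul_eq_mul]

private lemma diffAt_finset_prod {ι : Type*} {f : ι → (Fin n → ℝ) → ℝ} {x : Fin n → ℝ}
    (u : Finset ι) (h : ∀ i ∈ u, DifferentiableAt ℝ (f i) x) :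
    DifferentiableAt ℝ (fun z => ∏ i ∈ u, f i z) x := by
  classical
  induction u using Finset.induction_on with
  | empty => simpa using differentiableAt_const (1 : ℝ)
  | @insert a s ha ih =>
      simp only [Finset.prod_insert ha]
      exact (h a (Finset.mem_insert_self a s)).mul
        (ih fun i hi => h i (Finset.mem_insert_of_mem hi))

private lemma diffAt_det {M : (Fin n → ℝ) → Matrix (Fin n) (Fin n) ℝ} {x : Fin n → ℝ}
    (h : ∀ a b, DifferentiableAt ℝ (fun z => M z a b) x) :
    DifferentiableAt ℝ (fun z => (M z).det) x := by
  simp only [Matrix.det_apply']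
  refine DifferentiableAt.fun_sum fun σ _ => ?_
  have hprod : DifferentiableAt ℝ (fun z => ∏ a, M z (σ a) a) x :=
    diffAt_finset_prod Finset.univ fun a _ => h (σ a) a
  exact hprod.const_mul _

private lemma diffAt_inv_entry {g : (Fin n → ℝ) → Matrix (Fin n) (Fin n) ℝ} {x : Fin n → ℝ}
    (h : ∀ a b, DifferentiableAt ℝ (fun z => g z a b) x) (hdet : (g x).det ≠ 0) (k m : Fin n) :
    DifferentiableAt ℝ (fun z => (g z)⁻¹ k m) x := by
  have he : (fun z => (g z)⁻¹ k m)
      = fun z => ((g z).det)⁻¹ * ((g z).updateRow m (Pi.single k 1)).det := by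
    funext z
    rw [Matrix.inv_def, Matrix.smul_apply, smul_eq_mul, Ring.inverse_eq_inv,
      Matrix.adjugate_apply]
  rw [he]
  refine ((diffAt_det h).inv hdet).mul (diffAt_det fun a b => ?_)
  by_cases hab : a = m
  · simpa [Matrix.updateRow_apply, hab] using differentiableAt_const (Pi.single k (1:ℝ) b)
  · simpa [Matrix.updateRow_apply, hab] using h a b

private lemma fderiv_comp_fst {f : (Fin n → ℝ) → ℝ} {p : Pt n}
    (hf : DifferentiableAt ℝ f p.1) (v : Pt n) :
    fderiv ℝ (fun q : Pt n => f q.1) p v = fderiv ℝ f p.1 v.1 := by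
  have h : (fun q : Pt n => f q.1) = f ∘ Prod.fst := rfl
  rw [h, fderiv_comp p hf differentiableAt_fst, fderiv_fst]
  rfl

end Aux

/-- For a fiber-preserving vector field `X` inducing `V` on `U`:
`(L_X g₁)(X_i,X_j) = (L_V g)_{ij}`, `(L_X g₁)(X_i,X_j̄) = 0`, `(L_X g₁)(X_ī,X_j̄) = 0`. -/
theorem lieDer_g1 (n : ℕ) (hn : 1 ≤ n) (U : Set (Fin n → ℝ)) (hU : IsOpen U)
    (g : (Fin n → ℝ) → Matrix (Fin n) (Fin n) ℝ) (hg : IsMetric U g)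
    (Xh' : Fin n → (Fin n → ℝ) → ℝ) (Xv' : Fin n → Pt n → ℝ)
    (hX : SmoothComponents U Xh' Xv')
    (i j : Fin n) (p : Pt n) (hp : p.1 ∈ U) :
    lieDer (mkVF g Xh' Xv') (g1 g) (XH g i) (XH g j) p = lieG g Xh' i j p.1 ∧
      lieDer (mkVF g Xh' Xv') (g1 g) (XH g i) (XV j) p = 0 ∧
      lieDer (mkVF g Xh' Xv') (g1 g) (XV i) (XV j) p = 0 := by
  classical
  obtain ⟨hgs, hgsymm, hgpos⟩ := hg
  obtain ⟨hXhs, hXvs⟩ := hX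
  have hmem : U ∈ nhds p.1 := hU.mem_nhds hp
  -- basic differentiability facts
  have hgd : ∀ a b, DifferentiableAt ℝ (fun z => g z a b) p.1 :=
    fun a b => ((hgs a b).contDiffAt hmem).differentiableAt (by simp)
  have hpdd : ∀ (d a b : Fin n), DifferentiableAt ℝ (fun x => pd d (fun z => g z a b) x) p.1 := by
    intro d a b
    have h1 : ContDiffOn ℝ (⊤ : ℕ∞) (fun x => fderiv ℝ (fun z => g z a b) x) U :=
      (hgs a b).fderiv_of_isOpen hU (by simp)
    have h2 : ContDiffOn ℝ (⊤ : ℕ∞) (fun x => fderiv ℝ (fun z => g z a b) x (Pi.single d 1)) U :=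
      h1.clm_apply contDiffOn_const
    exact ((h2.contDiffAt hmem).differentiableAt (by simp))
  have hdet0 : (g p.1).det ≠ 0 := (hgpos p.1 hp).det_pos.ne'
  have hinvd : ∀ k m, DifferentiableAt ℝ (fun z => (g z)⁻¹ k m) p.1 :=
    diffAt_inv_entry hgd hdet0
  have hGamd : ∀ k a b, DifferentiableAt ℝ (Gam g k a b) p.1 := by
    intro k a b
    unfold Gam
    exact (DifferentiableAt.fun_sum fun m _ => (hinvd k m).mul
      (((hpdd a m b).add (hpdd b m a)).sub (hpdd m a b))).const_mul _
  have hq2 : ∀ a : Fin n, DifferentiableAt ℝ (fun q : Pt n => q.2 a) p :=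
    fun a => (differentiableAt_pi.1 differentiableAt_snd) a
  have hXhd : ∀ a, DifferentiableAt ℝ (Xh' a) p.1 :=
    fun a => ((hXhs a).contDiffAt hmem).differentiableAt (by simp)
  have hXhq : ∀ a, DifferentiableAt ℝ (fun q : Pt n => Xh' a q.1) p :=
    fun a => (hXhd a).comp p differentiableAt_fst
  have hGamq : ∀ k a b, DifferentiableAt ℝ (fun q : Pt n => Gam g k a b q.1) p :=
    fun k a b => (hGamd k a b).comp p differentiableAt_fst
  have hXvq : ∀ m, DifferentiableAt ℝ (Xv' m) p := by
    intro m
    have hmem2 : (U ×ˢ (Set.univ : Set (Fin n → ℝ))) ∈ nhds p :=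
      (hU.prod isOpen_univ).mem_nhds (Set.mem_prod.mpr ⟨hp, Set.mem_univ _⟩)
    exact ((hXvs m).contDiffAt hmem2).differentiableAt (by simp)
  -- the components of X = mkVF
  have hXeq : mkVF g Xh' Xv' = fun q : Pt n =>
      ((fun a => Xh' a q.1),
        fun m => (∑ h, Xh' h q.1 * (-∑ a, q.2 a * Gam g m a h q.1)) + Xv' m q) := by
    funext q
    refine Prod.ext ?_ ?_
    · funext a
      simp [mkVF, XH, XV, Prod.fst_sum, Finset.sum_apply, Pi.single_apply, smul_eq_mul,
        mul_ite, mul_one, mul_zero, Finset.sum_ite_eq, Finset.mem_univ]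
    · funext m
      simp [mkVF, XH, XV, Prod.snd_sum, Finset.sum_apply, Pi.single_apply, smul_eq_mul,
        mul_ite, mul_one, mul_zero, Finset.sum_ite_eq, Finset.mem_univ]
  have hF1d : DifferentiableAt ℝ (fun q : Pt n => (fun a => Xh' a q.1)) p :=
    differentiableAt_pi.2 hXhq
  have hF2d : DifferentiableAt ℝ (fun q : Pt n =>
      (fun m => (∑ h, Xh' h q.1 * (-∑ a, q.2 a * Gam g m a h q.1)) + Xv' m q)) p := by
    refine differentiableAt_pi.2 fun m => DifferentiableAt.add ?_ (hXvq m)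
    refine DifferentiableAt.fun_sum fun h _ => (hXhq h).mul ?_
    exact (DifferentiableAt.fun_sum fun a _ => (hq2 a).mul (hGamq m a h)).neg
  -- first component of the derivative of X
  have hXfst : ∀ v : Pt n,
      (fderiv ℝ (mkVF g Xh' Xv') p v).1 = fun a => fderiv ℝ (Xh' a) p.1 v.1 := by
    intro v
    rw [hXeq, DifferentiableAt.fderiv_prodMk hF1d hF2d]
    have h0 : (((fderiv ℝ (fun q : Pt n => (fun a => Xh' a q.1)) p).prod
        (fderiv ℝ (fun q : Pt n => (fun m =>
          (∑ h, Xh' h q.1 * (-∑ a, q.2 a * Gam g m a h q.1)) + Xv' m q)) p)) v).1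
        = fderiv ℝ (fun q : Pt n => (fun a => Xh' a q.1)) p v := rfl
    rw [h0, fderiv_pi hXhq]
    funext a
    show fderiv ℝ (fun q : Pt n => Xh' a q.1) p v = fderiv ℝ (Xh' a) p.1 v.1
    exact fderiv_comp_fst (hXhd a) v
  -- the horizontal frame fields
  have hXH2d : ∀ h0 : Fin n, DifferentiableAt ℝ
      (fun q : Pt n => (fun m => -∑ a, q.2 a * Gam g m a h0 q.1)) p :=
    fun h0 => differentiableAt_pi.2 fun m =>
      (DifferentiableAt.fun_sum fun a _ => (hq2 a).mul (hGamq m a h0)).neg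
  have hXHeq : ∀ h0 : Fin n, XH g h0 = fun q : Pt n =>
      ((Pi.single h0 1 : Fin n → ℝ), fun m => -∑ a, q.2 a * Gam g m a h0 q.1) :=
    fun h0 => rfl
  have hXHfst : ∀ (h0 : Fin n) (v : Pt n), (fderiv ℝ (XH g h0) p v).1 = 0 := by
    intro h0 v
    rw [hXHeq h0,
      DifferentiableAt.fderiv_prodMk (differentiableAt_const _) (hXH2d h0)]
    simp
  -- the brackets
  have hlieXH : ∀ h0 : Fin n, (lie (mkVF g Xh' Xv') (XH g h0) p).1
      = fun a => -(pd h0 (Xh' a) p.1) := by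
    intro h0
    have h1 : (lie (mkVF g Xh' Xv') (XH g h0) p).1
        = (fderiv ℝ (XH g h0) p (mkVF g Xh' Xv' p)).1
          - (fderiv ℝ (mkVF g Xh' Xv') p (XH g h0 p)).1 := rfl
    rw [h1, hXHfst, hXfst]
    funext a
    simp [pd, XH]
  have hlieXV : ∀ h0 : Fin n, (lie (mkVF g Xh' Xv') (XV h0) p).1 = 0 := by
    intro h0
    have h1 : (lie (mkVF g Xh' Xv') (XV h0) p).1
        = (fderiv ℝ (XV h0 : Pt n → Pt n) p (mkVF g Xh' Xv' p)).1
          - (fderiv ℝ (mkVF g Xh' Xv') p (XV h0 p)).1 := rfl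
    have h2 : fderiv ℝ (XV h0 : Pt n → Pt n) p = 0 := fderiv_const_apply _
    rw [h1, h2, hXfst]
    funext a
    simp [XV]
  -- the three statements
  refine ⟨?_, ?_, ?_⟩
  · -- horizontal-horizontal
    have hg1XHXH : (fun q : Pt n => g1 g q (XH g i q) (XH g j q)) = fun q => g q.1 i j := by
      funext q
      simp [g1, XH, Pi.single_apply, mul_ite, ite_mul, mul_zero, zero_mul, mul_one,
        Finset.sum_ite_eq, Finset.sum_ite_eq', Finset.mem_univ]
    have hdir1 : dirD (mkVF g Xh' Xv') (fun q => g1 g q (XH g i q) (XH g j q)) p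
        = ∑ a, Xh' a p.1 * pd a (fun z => g z i j) p.1 := by
      show fderiv ℝ (fun q : Pt n => g1 g q (XH g i q) (XH g j q)) p (mkVF g Xh' Xv' p) = _
      rw [hg1XHXH, fderiv_comp_fst (hgd i j)]
      have hXp1 : (mkVF g Xh' Xv' p).1 = fun a => Xh' a p.1 := by rw [hXeq]
      rw [hXp1, clm_eval]
      exact Finset.sum_congr rfl fun a _ => by simp [pd]
    have hterm2 : g1 g p (lie (mkVF g Xh' Xv') (XH g i) p) (XH g j p)
        = -∑ a, g p.1 a j * pd i (Xh' a) p.1 := by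
      simp only [g1, hlieXH i]
      simp [XH, Pi.single_apply, mul_ite, mul_one, mul_zero, Finset.sum_ite_eq,
        Finset.mem_univ, mul_neg, Finset.sum_neg_distrib]
    have hterm3 : g1 g p (XH g i p) (lie (mkVF g Xh' Xv') (XH g j) p)
        = -∑ a, g p.1 i a * pd j (Xh' a) p.1 := by
      simp only [g1, hlieXH j]
      simp [XH, Pi.single_apply, mul_ite, ite_mul, mul_one, mul_zero, zero_mul,
        Finset.sum_ite_eq, Finset.sum_ite_eq', Finset.mem_univ, mul_neg,
        Finset.sum_neg_distrib]
    show dirD (mkVF g Xh' Xv') (fun q => g1 g q (XH g i q) (XH g j q)) p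
        - g1 g p (lie (mkVF g Xh' Xv') (XH g i) p) (XH g j p)
        - g1 g p (XH g i p) (lie (mkVF g Xh' Xv') (XH g j) p) = lieG g Xh' i j p.1
    rw [hdir1, hterm2, hterm3, sub_neg_eq_add, sub_neg_eq_add]
    unfold lieG
    rw [← Finset.sum_add_distrib, ← Finset.sum_add_distrib]
    exact Finset.sum_congr rfl fun a _ => by ring
  · -- horizontal-vertical
    have e1 : (fun q : Pt n => g1 g q (XH g i q) (XV j q)) = fun _ => (0 : ℝ) := by
      funext q; simp [g1, XV]
    have e2 : g1 g p (lie (mkVF g Xh' Xv') (XH g i) p) (XV j p) = 0 := by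
      simp [g1, XV]
    have e3 : g1 g p (XH g i p) (lie (mkVF g Xh' Xv') (XV j) p) = 0 := by
      simp only [g1]
      rw [hlieXV j]
      simp
    show dirD (mkVF g Xh' Xv') (fun q => g1 g q (XH g i q) (XV j q)) p
        - g1 g p (lie (mkVF g Xh' Xv') (XH g i) p) (XV j p)
        - g1 g p (XH g i p) (lie (mkVF g Xh' Xv') (XV j) p) = 0
    rw [e2, e3]
    show fderiv ℝ (fun q : Pt n => g1 g q (XH g i q) (XV j q)) p (mkVF g Xh' Xv' p) - 0 - 0 = 0
    rw [e1]
    simp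
  · -- vertical-vertical
    have e1 : (fun q : Pt n => g1 g q (XV i q) (XV j q)) = fun _ => (0 : ℝ) := by
      funext q; simp [g1, XV]
    have e2 : g1 g p (lie (mkVF g Xh' Xv') (XV i) p) (XV j p) = 0 := by
      simp [g1, XV]
    have e3 : g1 g p (XV i p) (lie (mkVF g Xh' Xv') (XV j) p) = 0 := by
      simp [g1, XV]
    show dirD (mkVF g Xh' Xv') (fun q => g1 g q (XV i q) (XV j q)) p
        - g1 g p (lie (mkVF g Xh' Xv') (XV i) p) (XV j p)
        - g1 g p (XV i p) (lie (mkVF g Xh' Xv') (XV j) p) = 0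
    rw [e2, e3]
    show fderiv ℝ (fun q : Pt n => g1 g q (XV i q) (XV j q)) p (mkVF g Xh' Xv' p) - 0 - 0 = 0
    rw [e1]
    simp

end TangentLift
end

section
/- In the local model, let X = Σ_h X^h X_h + Σ_h X^{h̄} X_{h̄} be a fiber-preserving vector field on TU inducing V = Σ_h X^h ∂/∂x^h on U. Write C_j^m = Σ_{b,c} y^b X^c K_{jcb}{}^m − Σ_b X^{b̄} Γ^m_{bj} − X_j(X^{m̄}). Then the Lie derivative of g₃ along X satisfies, for all i, j: (L_X g₃)(X_i, X_j) = 0, (L_X g₃)(X_{ī}, X_j) = −Σ_m g_{mi} C_j^m, and (L_X g₃)(X_{ī}, X_{j̄}) = (L_V g)_{ij} − Σ_m g_{mj} ∇_i V^m − Σ_m g_{mi} ∇_j V^m + Σ_m g_{mj} ∂X^{m̄}/∂y^i + Σ_m g_{mi} ∂X^{m̄}/∂y^j. -/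
open scoped BigOperators

namespace TangentLift

variable {n : ℕ}

/-! ### Auxiliary lemmas -/

section Aux

variable {n : ℕ}

lemma fderiv_eq_sum (f : (Fin n → ℝ) → ℝ) (x : Fin n → ℝ) (w : Fin n → ℝ) :
    fderiv ℝ f x w = ∑ i, w i * pd i f x := by
  have hw : w = ∑ i, w i • (Pi.single i 1 : Fin n → ℝ) := by
    funext j
    simp [Finset.sum_apply, Pi.single_apply]
  conv_lhs => rw [hw]
  rw [map_sum]
  simp [pd]

lemma diffAt_prod {ι : Type} {E : Type} [NormedAddCommGroup E] [NormedSpace ℝ E]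
    {x : E} (u : Finset ι) (f : ι → E → ℝ)
    (h : ∀ i ∈ u, DifferentiableAt ℝ (f i) x) :
    DifferentiableAt ℝ (fun z => ∏ i ∈ u, f i z) x := by
  classical
  induction u using Finset.induction with
  | empty => simpa using differentiableAt_const (1:ℝ)
  | insert a s hni ih =>
    simp only [Finset.prod_insert hni]
    exact (h a (Finset.mem_insert_self a s)).mul
      (ih fun i hi => h i (Finset.mem_insert_of_mem hi))

lemma diff_det {A : (Fin n → ℝ) → Matrix (Fin n) (Fin n) ℝ} {x : Fin n → ℝ}
    (hA : ∀ i j, DifferentiableAt ℝ (fun z => A z i j) x) :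
    DifferentiableAt ℝ (fun z => (A z).det) x := by
  have : (fun z => (A z).det)
      = fun z => ∑ σ : Equiv.Perm (Fin n), ((Equiv.Perm.sign σ : ℤ) : ℝ) * ∏ i, A z (σ i) i := by
    funext z
    rw [Matrix.det_apply]
    simp [Units.smul_def, zsmul_eq_mul]
  rw [this]
  apply DifferentiableAt.fun_sum
  intro σ _
  apply DifferentiableAt.mul (differentiableAt_const _)
  exact diffAt_prod Finset.univ (fun i z => A z (σ i) i) (fun i _ => hA (σ i) i)

lemma diff_adj {A : (Fin n → ℝ) → Matrix (Fin n) (Fin n) ℝ} {x : Fin n → ℝ}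
    (hA : ∀ i j, DifferentiableAt ℝ (fun z => A z i j) x) (k m : Fin n) :
    DifferentiableAt ℝ (fun z => (A z).adjugate k m) x := by
  have : (fun z => (A z).adjugate k m)
      = fun z => ((A z).updateRow m (Pi.single k 1)).det := by
    funext z; rw [Matrix.adjugate_apply]
  rw [this]
  apply diff_det
  intro a b
  by_cases hab : a = m
  · simp [Matrix.updateRow_apply, hab]
  · simp only [Matrix.updateRow_apply, if_neg hab]
    exact hA a b

lemma diff_inv_entry {A : (Fin n → ℝ) → Matrix (Fin n) (Fin n) ℝ} {x : Fin n → ℝ}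
    (hA : ∀ i j, DifferentiableAt ℝ (fun z => A z i j) x)
    (hdet : (A x).det ≠ 0) (k m : Fin n) :
    DifferentiableAt ℝ (fun z => (A z)⁻¹ k m) x := by
  have : (fun z => (A z)⁻¹ k m)
      = fun z => ((A z).det)⁻¹ * (A z).adjugate k m := by
    funext z
    rw [Matrix.inv_def]
    simp [Ring.inverse_eq_inv']
  rw [this]
  exact ((diff_det hA).inv hdet).mul (diff_adj hA k m)

lemma diff_pd {f : (Fin n → ℝ) → ℝ} {x : Fin n → ℝ}
    (hf : ContDiffAt ℝ (⊤ : ℕ∞) f x) (m : Fin n) :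
    DifferentiableAt ℝ (pd m f) x := by
  have h1 : ContDiffAt ℝ (⊤ : ℕ∞) (fderiv ℝ f) x := hf.fderiv_right (by simp)
  have h2 : ContDiffAt ℝ (⊤ : ℕ∞) (fun z => fderiv ℝ f z (Pi.single m 1)) x :=
    h1.clm_apply contDiffAt_const
  exact h2.differentiableAt (by simp)

lemma pd_congr_nhds {f f' : (Fin n → ℝ) → ℝ} {x : Fin n → ℝ} (m : Fin n)
    (h : f =ᶠ[nhds x] f') : pd m f x = pd m f' x := by
  unfold pd; rw [Filter.EventuallyEq.fderiv_eq h]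

lemma gam_symm {U : Set (Fin n → ℝ)} (hU : IsOpen U)
    {g : (Fin n → ℝ) → Matrix (Fin n) (Fin n) ℝ}
    (hsymm : ∀ x ∈ U, (g x).IsSymm) {x : Fin n → ℝ} (hx : x ∈ U) (k i j : Fin n) :
    Gam g k i j x = Gam g k j i x := by
  have hev : ∀ a b : Fin n, (fun z => g z a b) =ᶠ[nhds x] (fun z => g z b a) := by
    intro a b
    filter_upwards [hU.mem_nhds hx] with z hz
    exact ((hsymm z hz).apply a b).symm
  unfold Gam
  congr 1
  apply Finset.sum_congr rfl; intro m _
  rw [pd_congr_nhds m (hev i j)]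
  ring

lemma pd_gam_symm {U : Set (Fin n → ℝ)} (hU : IsOpen U)
    {g : (Fin n → ℝ) → Matrix (Fin n) (Fin n) ℝ}
    (hsymm : ∀ x ∈ U, (g x).IsSymm) {x : Fin n → ℝ} (hx : x ∈ U) (c k i j : Fin n) :
    pd c (Gam g k i j) x = pd c (Gam g k j i) x := by
  apply pd_congr_nhds
  filter_upwards [hU.mem_nhds hx] with z hz
  exact gam_symm hU hsymm hz k i j

lemma diff_g {U : Set (Fin n → ℝ)} (hU : IsOpen U)
    {g : (Fin n → ℝ) → Matrix (Fin n) (Fin n) ℝ} (hg : IsMetric U g)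
    {x : Fin n → ℝ} (hx : x ∈ U) (i j : Fin n) :
    DifferentiableAt ℝ (fun z => g z i j) x :=
  ((hg.1 i j).contDiffAt (hU.mem_nhds hx)).differentiableAt (by simp)

lemma diff_gam {U : Set (Fin n → ℝ)} (hU : IsOpen U)
    {g : (Fin n → ℝ) → Matrix (Fin n) (Fin n) ℝ} (hg : IsMetric U g)
    {x : Fin n → ℝ} (hx : x ∈ U) (k i j : Fin n) :
    DifferentiableAt ℝ (Gam g k i j) x := by
  have hct : ∀ a b : Fin n, ContDiffAt ℝ (⊤ : ℕ∞) (fun z => g z a b) x :=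
    fun a b => (hg.1 a b).contDiffAt (hU.mem_nhds hx)
  have hdet : (g x).det ≠ 0 := ne_of_gt (hg.2.2 x hx).det_pos
  unfold Gam
  apply DifferentiableAt.const_mul
  apply DifferentiableAt.fun_sum
  intro m _
  exact (diff_inv_entry (fun a b => (hct a b).differentiableAt (by simp)) hdet k m).mul
    (((diff_pd (hct m j) i).add (diff_pd (hct m i) j)).sub (diff_pd (hct i j) m))

/-! directional-derivative bookkeeping -/

def DAt (φ : Pt n → ℝ) (p v : Pt n) (r : ℝ) : Prop :=
  DifferentiableAt ℝ φ p ∧ fderiv ℝ φ p v = r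

lemma DAt.add {φ ψ : Pt n → ℝ} {p v : Pt n} {r s : ℝ}
    (h1 : DAt φ p v r) (h2 : DAt ψ p v s) : DAt (fun q => φ q + ψ q) p v (r + s) :=
  ⟨h1.1.add h2.1, by rw [fderiv_fun_add h1.1 h2.1]; simp [h1.2, h2.2]⟩

lemma DAt.neg {φ : Pt n → ℝ} {p v : Pt n} {r : ℝ}
    (h1 : DAt φ p v r) : DAt (fun q => -φ q) p v (-r) :=
  ⟨h1.1.neg, by rw [fderiv_fun_neg]; simp [h1.2]⟩

lemma DAt.sub {φ ψ : Pt n → ℝ} {p v : Pt n} {r s : ℝ}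
    (h1 : DAt φ p v r) (h2 : DAt ψ p v s) : DAt (fun q => φ q - ψ q) p v (r - s) :=
  ⟨h1.1.sub h2.1, by rw [fderiv_fun_sub h1.1 h2.1]; simp [h1.2, h2.2]⟩

lemma DAt.mul {φ ψ : Pt n → ℝ} {p v : Pt n} {r s : ℝ}
    (h1 : DAt φ p v r) (h2 : DAt ψ p v s) :
    DAt (fun q => φ q * ψ q) p v (r * ψ p + φ p * s) :=
  ⟨h1.1.mul h2.1, by
    rw [fderiv_fun_mul h1.1 h2.1]
    simp [h1.2, h2.2, mul_comm, add_comm]⟩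

lemma DAt.sum {ι : Type} {s : Finset ι} {φ : ι → Pt n → ℝ} {p v : Pt n} {r : ι → ℝ}
    (h : ∀ i ∈ s, DAt (φ i) p v (r i)) :
    DAt (fun q => ∑ i ∈ s, φ i q) p v (∑ i ∈ s, r i) := by
  constructor
  · exact DifferentiableAt.fun_sum fun i hi => (h i hi).1
  · rw [fderiv_fun_sum fun i hi => (h i hi).1]
    simp only [ContinuousLinearMap.coe_sum', Finset.sum_apply]
    exact Finset.sum_congr rfl fun i hi => (h i hi).2

lemma DAt.fstComp {f : (Fin n → ℝ) → ℝ} {p : Pt n} (v : Pt n)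
    (hf : DifferentiableAt ℝ f p.1) :
    DAt (fun q : Pt n => f q.1) p v (fderiv ℝ f p.1 v.1) := by
  have h : HasFDerivAt (fun q : Pt n => f q.1)
      ((fderiv ℝ f p.1).comp (ContinuousLinearMap.fst ℝ (Fin n → ℝ) (Fin n → ℝ))) p :=
    hf.hasFDerivAt.comp p hasFDerivAt_fst
  exact ⟨h.differentiableAt, by rw [h.fderiv]; simp⟩

lemma DAt.sndA (a : Fin n) (p v : Pt n) : DAt (fun q : Pt n => q.2 a) p v (v.2 a) := by
  have h : HasFDerivAt (fun q : Pt n => q.2 a)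
      ((ContinuousLinearMap.proj a).comp (ContinuousLinearMap.snd ℝ (Fin n → ℝ) (Fin n → ℝ))) p :=
    ((ContinuousLinearMap.proj a).comp
      (ContinuousLinearMap.snd ℝ (Fin n → ℝ) (Fin n → ℝ))).hasFDerivAt
  exact ⟨h.differentiableAt, by rw [h.fderiv]; simp⟩

lemma DAt.of_diff {φ : Pt n → ℝ} {p : Pt n} (v : Pt n) (h : DifferentiableAt ℝ φ p) :
    DAt φ p v (fderiv ℝ φ p v) := ⟨h, rfl⟩

lemma fderiv_comp_fst_apply {W : Pt n → Pt n} {p v : Pt n} (hW : DifferentiableAt ℝ W p)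
    (i : Fin n) : fderiv ℝ (fun q => (W q).1 i) p v = (fderiv ℝ W p v).1 i := by
  have h : HasFDerivAt (fun q => (W q).1 i)
      (((ContinuousLinearMap.proj i).comp
        (ContinuousLinearMap.fst ℝ (Fin n → ℝ) (Fin n → ℝ))).comp (fderiv ℝ W p)) p :=
    (((ContinuousLinearMap.proj i).comp
      (ContinuousLinearMap.fst ℝ (Fin n → ℝ) (Fin n → ℝ))).hasFDerivAt).comp p hW.hasFDerivAt
  rw [h.fderiv]; simp

lemma fderiv_comp_snd_apply {W : Pt n → Pt n} {p v : Pt n} (hW : DifferentiableAt ℝ W p)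
    (m : Fin n) : fderiv ℝ (fun q => (W q).2 m) p v = (fderiv ℝ W p v).2 m := by
  have h : HasFDerivAt (fun q => (W q).2 m)
      (((ContinuousLinearMap.proj m).comp
        (ContinuousLinearMap.snd ℝ (Fin n → ℝ) (Fin n → ℝ))).comp (fderiv ℝ W p)) p :=
    (((ContinuousLinearMap.proj m).comp
      (ContinuousLinearMap.snd ℝ (Fin n → ℝ) (Fin n → ℝ))).hasFDerivAt).comp p hW.hasFDerivAt
  rw [h.fderiv]; simp

lemma mkVF_eq (g : (Fin n → ℝ) → Matrix (Fin n) (Fin n) ℝ)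
    (Xh' : Fin n → (Fin n → ℝ) → ℝ) (Xv' : Fin n → Pt n → ℝ) :
    mkVF g Xh' Xv' = fun q =>
      ((fun i => Xh' i q.1),
       fun m => Xv' m q - ∑ h, ∑ a, Xh' h q.1 * (q.2 a * Gam g m a h q.1)) := by
  funext q
  unfold mkVF XH XV
  refine Prod.ext ?_ ?_
  · simp only [Prod.fst_add, Prod.fst_sum, Prod.smul_fst]
    funext i
    simp [Pi.single_apply, Finset.sum_apply, mul_ite]
  · simp only [Prod.snd_add, Prod.snd_sum, Prod.smul_snd]
    funext m
    simp only [Pi.add_apply, Finset.sum_apply, Pi.smul_apply, smul_eq_mul,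
      Pi.single_apply, mul_ite, mul_one, mul_zero]
    rw [Finset.sum_ite_eq Finset.univ m (fun h => Xv' h q)]
    have key : ∀ h : Fin n, Xh' h q.1 * -∑ a, q.2 a * Gam g m a h q.1
        = -∑ a, Xh' h q.1 * (q.2 a * Gam g m a h q.1) := by
      intro h; rw [mul_neg, Finset.mul_sum]
    simp only [key, Finset.sum_neg_distrib]
    simp
    ring

/-! pointwise evaluations of `ver` and `g3` on the adapted frame -/

lemma ver_XH (g : (Fin n → ℝ) → Matrix (Fin n) (Fin n) ℝ) (q : Pt n) (h m : Fin n) :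
    ver g q (XH g h q) m = 0 := by
  unfold ver XH
  simp only [Pi.single_apply, mul_ite, mul_one, mul_zero]
  rw [Finset.sum_comm]
  simp [Finset.sum_ite_eq']

lemma ver_XV (g : (Fin n → ℝ) → Matrix (Fin n) (Fin n) ℝ) (q : Pt n) (h m : Fin n) :
    ver g q (XV h q) m = if m = h then 1 else 0 := by
  unfold ver XV
  simp [Pi.single_apply]

lemma g3_right_XH (g : (Fin n → ℝ) → Matrix (Fin n) (Fin n) ℝ) (q : Pt n) (v : Pt n)
    (h : Fin n) : g3 g q v (XH g h q) = 0 := by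
  unfold g3
  simp [ver_XH]

lemma g3_left_XH (g : (Fin n → ℝ) → Matrix (Fin n) (Fin n) ℝ) (q : Pt n) (v : Pt n)
    (h : Fin n) : g3 g q (XH g h q) v = 0 := by
  unfold g3
  simp [ver_XH]

lemma g3_right_XV (g : (Fin n → ℝ) → Matrix (Fin n) (Fin n) ℝ) (q : Pt n) (v : Pt n)
    (j : Fin n) : g3 g q v (XV j q) = ∑ i, g q.1 i j * ver g q v i := by
  unfold g3
  apply Finset.sum_congr rfl
  intro i _
  simp [ver_XV, Pi.single_apply, mul_ite, Finset.sum_ite_eq']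

lemma g3_left_XV (g : (Fin n → ℝ) → Matrix (Fin n) (Fin n) ℝ) (q : Pt n) (v : Pt n)
    (i : Fin n) : g3 g q (XV i q) v = ∑ j, g q.1 i j * ver g q v j := by
  unfold g3
  rw [Finset.sum_comm]
  apply Finset.sum_congr rfl
  intro j _
  simp only [ver_XV]
  simp [Pi.single_apply, mul_ite, ite_mul, Finset.sum_ite_eq']


lemma sum3_swap13 {n : ℕ} (f : Fin n → Fin n → Fin n → ℝ) :
    ∑ x, ∑ y, ∑ z, f x y z = ∑ z, ∑ y, ∑ x, f x y z := by
  calc ∑ x, ∑ y, ∑ z, f x y z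
      = ∑ y, ∑ x, ∑ z, f x y z := Finset.sum_comm
    _ = ∑ y, ∑ z, ∑ x, f x y z := Finset.sum_congr rfl fun y _ => Finset.sum_comm
    _ = ∑ z, ∑ y, ∑ x, f x y z := Finset.sum_comm

lemma sum3_cycle {n : ℕ} (f : Fin n → Fin n → Fin n → ℝ) :
    ∑ x, ∑ y, ∑ z, f x y z = ∑ z, ∑ x, ∑ y, f x y z := by
  calc ∑ x, ∑ y, ∑ z, f x y z
      = ∑ x, ∑ z, ∑ y, f x y z := Finset.sum_congr rfl fun x _ => Finset.sum_comm
    _ = ∑ z, ∑ x, ∑ y, f x y z := Finset.sum_comm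

lemma key2 {n : ℕ} (m j : Fin n) (Y A Xv PX : Fin n → ℝ)
    (G : Fin n → Fin n → Fin n → ℝ) (P : Fin n → Fin n → Fin n → Fin n → ℝ) (D : ℝ)
    (hGsym : ∀ k a b, G k a b = G k b a) (hPsym : ∀ c k a b, P c k a b = P c k b a) :
    -∑ x, ((Xv x - ∑ h, ∑ a, A h * (Y a * G x a h)) * G m x j
          + Y x * ∑ c, A c * P c m x j)
      - (D - ∑ x, ∑ x1, (PX x * (Y x1 * G m x1 x)
          + A x * ((-∑ b, Y b * G x1 b j) * G m x1 x + Y x1 * P j m x1 x)))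
      + ∑ x, ∑ x1, Y x * G m x x1 * (0 - PX x1)
    = ∑ b, ∑ c, Y b * A c * (P j m c b - P c m j b
          + ∑ a, (G m j a * G a c b - G m c a * G a j b))
      - ∑ b, Xv b * G m b j - D := by
  have hL2 : ∑ x : Fin n, ∑ x1 : Fin n, ∑ x2 : Fin n, A x1 * (Y x2 * (G x x2 x1 * G m x j))
      = ∑ x : Fin n, ∑ x1 : Fin n, ∑ x2 : Fin n, Y x * (A x1 * (G m j x2 * G x2 x1 x)) := by
    rw [sum3_swap13]
    refine Finset.sum_congr rfl fun x _ => Finset.sum_congr rfl fun y _ =>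
      Finset.sum_congr rfl fun z _ => ?_
    rw [hGsym m z j, hGsym z x y]
    ring
  have hL3 : ∑ x : Fin n, ∑ i : Fin n, Y x * (A i * P i m x j)
      = ∑ x : Fin n, ∑ x1 : Fin n, Y x * (A x1 * P x1 m j x) := by
    refine Finset.sum_congr rfl fun x _ => Finset.sum_congr rfl fun y _ => ?_
    rw [hPsym y m x j]
  have hL6 : ∑ x : Fin n, ∑ x1 : Fin n, ∑ i : Fin n, A x * (Y i * (G x1 i j * G m x1 x))
      = ∑ x : Fin n, ∑ x1 : Fin n, ∑ x2 : Fin n, Y x * (A x1 * (G m x1 x2 * G x2 j x)) := by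
    rw [sum3_cycle]
    refine Finset.sum_congr rfl fun x _ => Finset.sum_congr rfl fun y _ =>
      Finset.sum_congr rfl fun z _ => ?_
    rw [hGsym z x j, hGsym m z y]
    ring
  have hL7 : ∑ x : Fin n, ∑ x1 : Fin n, A x * (Y x1 * P j m x1 x)
      = ∑ x : Fin n, ∑ x1 : Fin n, Y x * (A x1 * P j m x1 x) := by
    rw [Finset.sum_comm]
    refine Finset.sum_congr rfl fun x _ => Finset.sum_congr rfl fun y _ => ?_
    rw [hPsym j m y x]
    ring
  have hL5 : ∑ x : Fin n, ∑ x1 : Fin n, PX x * (Y x1 * G m x1 x)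
      = ∑ x : Fin n, ∑ x1 : Fin n, Y x * (G m x x1 * PX x1) := by
    rw [Finset.sum_comm]
    refine Finset.sum_congr rfl fun x _ => Finset.sum_congr rfl fun y _ => ?_
    ring
  simp only [sub_mul, add_mul, mul_add, mul_sub, neg_mul, mul_neg,
    Finset.sum_sub_distrib, Finset.sum_add_distrib, Finset.sum_neg_distrib,
    Finset.mul_sum, Finset.sum_mul, zero_sub, mul_zero, zero_mul, neg_neg, sub_eq_add_neg,
    neg_add, mul_assoc]
  rw [hL2, hL3, hL6, hL7, hL5]
  simp only [Finset.sum_const_zero]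
  ring

lemma key3 {n : ℕ} (i j : Fin n) (A PXi PXj DYi DYj Pg : Fin n → ℝ)
    (gm : Fin n → Fin n → ℝ) (G : Fin n → Fin n → Fin n → ℝ)
    (hsym : ∀ a b, gm a b = gm b a) :
    (∑ a, A a * Pg a)
      - ∑ x, gm x j * (-(DYi x) + ∑ h, A h * G x i h)
      - ∑ x, gm i x * (-(DYj x) + ∑ h, A h * G x j h)
    = (∑ a, (A a * Pg a + PXi a * gm a j + PXj a * gm i a))
        - (∑ m, gm m j * (PXi m + ∑ a, G m i a * A a))
        - (∑ m, gm m i * (PXj m + ∑ a, G m j a * A a))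
        + (∑ m, gm m j * DYi m) + ∑ m, gm m i * DYj m := by
  simp only [mul_add, mul_neg, Finset.mul_sum, Finset.sum_add_distrib,
    Finset.sum_neg_distrib, sub_eq_add_neg, neg_add, neg_neg]
  have h1 : ∀ (x : Fin n), ∑ h, gm i x * (A h * G x j h) = ∑ h, gm x i * (G x j h * A h) :=
    fun x => Finset.sum_congr rfl fun h _ => by rw [hsym i x]; ring
  have h2 : ∑ x, gm i x * DYj x = ∑ x, gm x i * DYj x :=
    Finset.sum_congr rfl fun x _ => by rw [hsym i x]
  have h3 : ∑ a, PXj a * gm i a = ∑ a, gm a i * PXj a :=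
    Finset.sum_congr rfl fun a _ => by rw [hsym i a]; ring
  have h4 : ∀ (x : Fin n), ∑ h, gm x j * (A h * G x i h) = ∑ h, gm x j * (G x i h * A h) :=
    fun x => Finset.sum_congr rfl fun h _ => by ring
  have h5 : ∑ a, PXi a * gm a j = ∑ a, gm a j * PXi a :=
    Finset.sum_congr rfl fun a _ => by ring
  simp only [h1, h2, h3, h4, h5]
  ring

lemma g3_XV_XV {n : ℕ} (g : (Fin n → ℝ) → Matrix (Fin n) (Fin n) ℝ) (q : Pt n) (i j : Fin n) :
    g3 g q (XV i q) (XV j q) = g q.1 i j := by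
  rw [g3_left_XV]
  simp [ver_XV, mul_ite, Finset.sum_ite_eq']

end Aux

/-- For a fiber-preserving vector field `X` inducing `V` on `U`, with
`C_j^m = Σ_{b,c} y^b X^c K_{jcb}{}^m − Σ_b X^b̄ Γ^m_{bj} − X_j(X^m̄)`:
`(L_X g₃)(X_i,X_j) = 0`, `(L_X g₃)(X_ī,X_j) = −Σ_m g_{mi} C_j^m`, and
`(L_X g₃)(X_ī,X_j̄) = (L_V g)_{ij} − Σ_m g_{mj} ∇_i V^m − Σ_m g_{mi} ∇_j V^m
  + Σ_m g_{mj} ∂X^m̄/∂y^i + Σ_m g_{mi} ∂X^m̄/∂y^j`. -/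
theorem lieDer_g3 (n : ℕ) (hn : 1 ≤ n) (U : Set (Fin n → ℝ)) (hU : IsOpen U)
    (g : (Fin n → ℝ) → Matrix (Fin n) (Fin n) ℝ) (hg : IsMetric U g)
    (Xh' : Fin n → (Fin n → ℝ) → ℝ) (Xv' : Fin n → Pt n → ℝ)
    (hX : SmoothComponents U Xh' Xv')
    (C : Fin n → Fin n → Pt n → ℝ)
    (hC : ∀ j m q, C j m q
      = (∑ b, ∑ c, q.2 b * Xh' c q.1 * Curv g j c b m q.1)
        - (∑ b, Xv' b q * Gam g m b j q.1) - dirD (XH g j) (Xv' m) q)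
    (i j : Fin n) (p : Pt n) (hp : p.1 ∈ U) :
    lieDer (mkVF g Xh' Xv') (g3 g) (XH g i) (XH g j) p = 0 ∧
      lieDer (mkVF g Xh' Xv') (g3 g) (XV i) (XH g j) p = -∑ m, g p.1 m i * C j m p ∧
      lieDer (mkVF g Xh' Xv') (g3 g) (XV i) (XV j) p
        = lieG g Xh' i j p.1 - (∑ m, g p.1 m j * covD g Xh' i m p.1)
            - (∑ m, g p.1 m i * covD g Xh' j m p.1)
            + (∑ m, g p.1 m j * dirD (XV i) (Xv' m) p)
            + ∑ m, g p.1 m i * dirD (XV j) (Xv' m) p := by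
  classical
  have hsym : ∀ a b : Fin n, g p.1 a b = g p.1 b a := fun a b => (hg.2.1 p.1 hp).apply b a
  have dXh : ∀ h, DifferentiableAt ℝ (Xh' h) p.1 :=
    fun h => ((hX.1 h).contDiffAt (hU.mem_nhds hp)).differentiableAt (by simp)
  have hpU2 : p ∈ U ×ˢ (Set.univ : Set (Fin n → ℝ)) := Set.mem_prod.2 ⟨hp, trivial⟩
  have dXv : ∀ m, DifferentiableAt ℝ (Xv' m) p :=
    fun m => ((hX.2 m).contDiffAt ((hU.prod isOpen_univ).mem_nhds hpU2)).differentiableAt (by simp)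
  have dGam : ∀ k a b, DifferentiableAt ℝ (Gam g k a b) p.1 :=
    fun k a b => diff_gam hU hg hp k a b
  rw [mkVF_eq g Xh' Xv']
  set XF : Pt n → Pt n := fun q =>
      ((fun i => Xh' i q.1),
       fun m => Xv' m q - ∑ h, ∑ a, Xh' h q.1 * (q.2 a * Gam g m a h q.1)) with hXF
  -- differentiability of the frame and of `XF`
  have diffXV : ∀ i0 : Fin n, DifferentiableAt ℝ (XV (n := n) i0) p := by
    intro i0
    unfold XV
    exact differentiableAt_const _
  have diffXF : DifferentiableAt ℝ XF p := by
    rw [hXF]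
    apply DifferentiableAt.prodMk
    · exact differentiableAt_pi.2 fun i => (DAt.fstComp (f := Xh' i) p (dXh i)).1
    · refine differentiableAt_pi.2 fun m => ?_
      refine (dXv m).sub ?_
      refine DifferentiableAt.fun_sum fun h _ => ?_
      refine DifferentiableAt.fun_sum fun a _ => ?_
      exact ((DAt.fstComp p (dXh h)).mul ((DAt.sndA a p p).mul (DAt.fstComp p (dGam m a h)))).1
  have diffXH : ∀ j' : Fin n, DifferentiableAt ℝ (XH g j') p := by
    intro j'
    unfold XH
    apply DifferentiableAt.prodMk
    · exact differentiableAt_const _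
    · refine differentiableAt_pi.2 fun m => ?_
      refine DifferentiableAt.neg ?_
      refine DifferentiableAt.fun_sum fun a _ => ?_
      exact ((DAt.sndA a p p).mul (DAt.fstComp p (dGam m a j'))).1
  -- components of Lie brackets
  have lie1 : ∀ (Z W : Pt n → Pt n), DifferentiableAt ℝ Z p → DifferentiableAt ℝ W p →
      ∀ i' : Fin n, (lie Z W p).1 i'
        = fderiv ℝ (fun q => (W q).1 i') p (Z p) - fderiv ℝ (fun q => (Z q).1 i') p (W p) := by
    intro Z W hZ hW i'
    unfold lie
    rw [Prod.fst_sub, Pi.sub_apply]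
    simp only [fderiv_comp_fst_apply hW, fderiv_comp_fst_apply hZ]
  have lie2 : ∀ (Z W : Pt n → Pt n), DifferentiableAt ℝ Z p → DifferentiableAt ℝ W p →
      ∀ m : Fin n, (lie Z W p).2 m
        = fderiv ℝ (fun q => (W q).2 m) p (Z p) - fderiv ℝ (fun q => (Z q).2 m) p (W p) := by
    intro Z W hZ hW m
    unfold lie
    rw [Prod.snd_sub, Pi.sub_apply]
    simp only [fderiv_comp_snd_apply hW, fderiv_comp_snd_apply hZ]
  -- scalar directional derivatives
  have hfd_XF1 : ∀ (v : Pt n) (i' : Fin n),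
      fderiv ℝ (fun q => (XF q).1 i') p v = fderiv ℝ (Xh' i') p.1 v.1 := by
    intro v i'
    have e : (fun q => (XF q).1 i') = fun q : Pt n => Xh' i' q.1 := by rw [hXF]
    rw [e]
    exact (DAt.fstComp v (dXh i')).2
  have hfd_XF2 : ∀ (v : Pt n) (m : Fin n),
      fderiv ℝ (fun q => (XF q).2 m) p v
        = fderiv ℝ (Xv' m) p v - ∑ h, ∑ a,
            (fderiv ℝ (Xh' h) p.1 v.1 * (p.2 a * Gam g m a h p.1)
              + Xh' h p.1 * (v.2 a * Gam g m a h p.1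
                  + p.2 a * fderiv ℝ (Gam g m a h) p.1 v.1)) := by
    intro v m
    have e : (fun q => (XF q).2 m) = fun q : Pt n =>
        Xv' m q - ∑ h, ∑ a, Xh' h q.1 * (q.2 a * Gam g m a h q.1) := by rw [hXF]
    rw [e]
    exact ((DAt.of_diff v (dXv m)).sub (DAt.sum fun h _ => DAt.sum fun a _ =>
      (DAt.fstComp v (dXh h)).mul ((DAt.sndA a p v).mul (DAt.fstComp v (dGam m a h))))).2
  have hfd_XH1 : ∀ (v : Pt n) (j' i' : Fin n),
      fderiv ℝ (fun q => (XH g j' q).1 i') p v = 0 := by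
    intro v j' i'
    have e : (fun q => (XH g j' q).1 i') = fun _ : Pt n => (Pi.single j' 1 : Fin n → ℝ) i' := rfl
    rw [e, fderiv_fun_const]
    simp
  have hfd_XH2 : ∀ (v : Pt n) (j' m : Fin n),
      fderiv ℝ (fun q => (XH g j' q).2 m) p v
        = -∑ a, (v.2 a * Gam g m a j' p.1 + p.2 a * fderiv ℝ (Gam g m a j') p.1 v.1) := by
    intro v j' m
    have e : (fun q => (XH g j' q).2 m) = fun q : Pt n => -∑ a, q.2 a * Gam g m a j' q.1 := rfl
    rw [e]
    exact ((DAt.sum fun a _ => (DAt.sndA a p v).mul (DAt.fstComp v (dGam m a j'))).neg).2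
  have hfd_XV1 : ∀ (v : Pt n) (i0 k : Fin n),
      fderiv ℝ (fun q => (XV (n := n) i0 q).1 k) p v = 0 := by
    intro v i0 k
    have e : (fun q => (XV (n := n) i0 q).1 k) = fun _ : Pt n => (0 : Fin n → ℝ) k := rfl
    rw [e, fderiv_fun_const]
    simp
  have hfd_XV2 : ∀ (v : Pt n) (i0 m : Fin n),
      fderiv ℝ (fun q => (XV (n := n) i0 q).2 m) p v = 0 := by
    intro v i0 m
    have e : (fun q => (XV (n := n) i0 q).2 m)
        = fun _ : Pt n => (Pi.single i0 1 : Fin n → ℝ) m := rfl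
    rw [e, fderiv_fun_const]
    simp
  refine ⟨?_, ?_, ?_⟩
  · -- part 1
    have hzero : (fun q => g3 g q (XH g i q) (XH g j q)) = fun _ : Pt n => (0:ℝ) :=
      funext fun q => g3_left_XH g q (XH g j q) i
    unfold lieDer dirD
    rw [hzero, fderiv_fun_const]
    rw [g3_right_XH g p (lie XF (XH g i) p) j, g3_left_XH g p (lie XF (XH g j) p) i]
    simp
  · -- part 2
    have hXFp1 : (XF p).1 = fun c => Xh' c p.1 := by rw [hXF]
    have hXFp2 : ∀ a, (XF p).2 a
        = Xv' a p - ∑ h, ∑ b, Xh' h p.1 * (p.2 b * Gam g a b h p.1) := fun a => by rw [hXF]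
    have hXHp1 : (XH g j p).1 = Pi.single j 1 := rfl
    have hXHp2 : ∀ a, (XH g j p).2 a = -∑ b, p.2 b * Gam g a b j p.1 := fun a => rfl
    have hpdj : ∀ f : (Fin n → ℝ) → ℝ, fderiv ℝ f p.1 (Pi.single j 1) = pd j f p.1 :=
      fun f => rfl
    have hver : ∀ m, ver g p (lie XF (XH g j) p) m = C j m p := by
      intro m
      unfold ver
      rw [lie2 XF (XH g j) diffXF (diffXH j) m, hfd_XH2 (XF p) j m, hfd_XF2 (XH g j p) m]
      simp only [lie1 XF (XH g j) diffXF (diffXH j), hfd_XH1, hfd_XF1]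
      rw [hC j m p]
      unfold dirD
      simp only [hXFp1, hXFp2, hXHp1, hXHp2, hpdj]
      simp only [fderiv_eq_sum (Gam g m _ j) p.1]
      simp only [Curv]
      exact key2 m j (fun a => p.2 a) (fun h => Xh' h p.1) (fun a => Xv' a p)
        (fun h => pd j (Xh' h) p.1) (fun k a b => Gam g k a b p.1)
        (fun c k a b => pd c (Gam g k a b) p.1) (fderiv ℝ (Xv' m) p (XH g j p))
        (fun k a b => gam_symm hU hg.2.1 hp k a b)
        (fun c k a b => pd_gam_symm hU hg.2.1 hp c k a b)
    have hzero2 : (fun q => g3 g q (XV i q) (XH g j q)) = fun _ : Pt n => (0:ℝ) :=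
      funext fun q => g3_right_XH g q (XV i q) j
    unfold lieDer dirD
    rw [hzero2, fderiv_fun_const]
    rw [g3_right_XH g p (lie XF (XV i) p) j]
    rw [g3_left_XV g p (lie XF (XH g j) p) i]
    simp only [hver]
    have hsw : ∑ m, g p.1 i m * C j m p = ∑ m, g p.1 m i * C j m p :=
      Finset.sum_congr rfl fun m _ => by rw [hsym i m]
    rw [hsw]
    simp
  · -- part 3
    have hXFp1 : (XF p).1 = fun c => Xh' c p.1 := by rw [hXF]
    have hXVp1 : ∀ i0 : Fin n, (XV (n := n) i0 p).1 = (0 : Fin n → ℝ) := fun _ => rfl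
    have hXVp2 : ∀ (i0 a : Fin n), (XV (n := n) i0 p).2 a = if a = i0 then 1 else 0 :=
      fun i0 a => by simp [XV, Pi.single_apply]
    have hlieXV1 : ∀ i0 i' : Fin n, (lie XF (XV i0) p).1 i' = 0 := by
      intro i0 i'
      rw [lie1 XF (XV i0) diffXF (diffXV i0) i', hfd_XV1 (XF p) i0 i',
        hfd_XF1 (XV i0 p) i', hXVp1 i0]
      simp
    have hlieXV2 : ∀ i0 m : Fin n, (lie XF (XV i0) p).2 m
        = -(fderiv ℝ (Xv' m) p (XV i0 p)) + ∑ h, Xh' h p.1 * Gam g m i0 h p.1 := by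
      intro i0 m
      rw [lie2 XF (XV i0) diffXF (diffXV i0) m, hfd_XV2 (XF p) i0 m, hfd_XF2 (XV i0 p) m,
        hXVp1 i0]
      simp only [hXVp2 i0, map_zero, zero_mul, mul_zero, zero_add, add_zero, zero_sub,
        ite_mul, one_mul, mul_ite, mul_one]
      rw [neg_sub, sub_eq_neg_add]
      congr 1
      apply Finset.sum_congr rfl
      intro x _
      rw [Finset.sum_ite_eq' Finset.univ i0 (fun x1 => Xh' x p.1 * Gam g m x1 x p.1)]
      simp
    have hverXV : ∀ i0 m : Fin n, ver g p (lie XF (XV i0) p) m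
        = -(fderiv ℝ (Xv' m) p (XV i0 p)) + ∑ h, Xh' h p.1 * Gam g m i0 h p.1 := by
      intro i0 m
      unfold ver
      rw [hlieXV2 i0 m]
      simp [hlieXV1 i0]
    have hgfun : (fun q => g3 g q (XV i q) (XV j q)) = fun q : Pt n => g q.1 i j :=
      funext fun q => g3_XV_XV g q i j
    have hdirD3 : fderiv ℝ (fun q : Pt n => g q.1 i j) p (XF p)
        = ∑ a, Xh' a p.1 * pd a (fun z => g z i j) p.1 := by
      have e : fderiv ℝ (fun q : Pt n => g q.1 i j) p (XF p)
          = fderiv ℝ (fun z => g z i j) p.1 (XF p).1 :=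
        (DAt.fstComp (XF p) (diff_g hU hg hp i j)).2
      rw [e, fderiv_eq_sum, hXFp1]
    unfold lieDer dirD
    rw [hgfun, hdirD3]
    rw [g3_right_XV g p (lie XF (XV i) p) j]
    rw [g3_left_XV g p (lie XF (XV j) p) i]
    simp only [hverXV]
    unfold lieG covD
    exact key3 i j (fun a => Xh' a p.1) (fun h => pd i (Xh' h) p.1)
      (fun h => pd j (Xh' h) p.1) (fun m => fderiv ℝ (Xv' m) p (XV i p))
      (fun m => fderiv ℝ (Xv' m) p (XV j p)) (fun a => pd a (fun z => g z i j) p.1)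
      (fun a b => g p.1 a b) (fun k a b => Gam g k a b p.1) hsym

end TangentLift
end
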